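/- Let k₊ > k₋ > 0, n := k₋/k₊, θc := arccos n ∈ (0,π/2), and θ_x ∈ (0, π/2). Set σ_{θx} := √k₊·min(sin((θc+θ_x)/2), cos((θc−θ_x)/2)), σ⁽¹⁾ := min(σ_{θx}, √k₊·sin((π−θc−θ_x)/2)) and σ⁽²⁾ := √k₊·|sin((θc−θ_x)/2)|. Then: (i) the function s ↦ H_{θc}(s)·H_{π−θc}(s)·√(s − s_b*) is complex differentiable on the strip L_{σ⁽¹⁾} := {s : |Im s| < σ⁽¹⁾}; (ii) the function s ↦ H_{θc}(s)·H_{π−θc}(s)·√(s − s_b*)·√(s − s_b) is complex differentiable on the strip L_{σ⁽²⁾} := {s : |Im s| < σ⁽²⁾}; (iii) min(√k₊·sin(θc/2), √k₊·sin(π/4 − θc/2)) ≤ σ⁽¹⁾ ≤ √k₊/√2 < √k₊, and in particular σ⁽¹⁾ > 0. -/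

import Mathlib

open Complex Set

noncomputable section

/-- Principal square root on ℂ via the principal power. -/
def csqrt (z : ℂ) : ℂ := z ^ (1/2 : ℂ)

def S1 (z : ℂ) : ℂ := Complex.exp (-(Real.pi : ℂ) / 4 * Complex.I) * csqrt (Complex.I * z)

def S2 (z : ℂ) : ℂ := Complex.exp ((Real.pi : ℂ) / 4 * Complex.I) * csqrt (-Complex.I * z)

def Sc (z : ℂ) (a : ℝ) : ℂ := S1 (z - (a : ℂ)) * S2 (z + (a : ℂ))

def Sct (z : ℂ) (a : ℝ) : ℂ := S2 (z - (a : ℂ)) * S2 (z + (a : ℂ))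

def Pf (kp : ℝ) (s : ℂ) : ℂ := csqrt (1 - s ^ 2 / (2 * (kp : ℂ) * Complex.I))

def Qf (kp : ℝ) (s : ℂ) : ℂ :=
  s * Complex.exp (-(Real.pi : ℂ) / 4 * Complex.I) / (Real.sqrt (2 * kp) : ℂ)

/-- Principal branch of arcsin on ℂ. -/
def arcsinC (w : ℂ) : ℂ := -Complex.I * Complex.log (Complex.I * w + csqrt (1 - w ^ 2))

def zetaF (kp θx : ℝ) (s : ℂ) : ℂ := 2 * arcsinC (Qf kp s) + (θx : ℂ)

def F1f (kp θx θ : ℝ) (s : ℂ) : ℂ :=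
  1 + Pf kp s * (Real.cos ((θ - θx) / 2) : ℂ) + Qf kp s * (Real.sin ((θ - θx) / 2) : ℂ)

def F2f (kp θx θ : ℝ) (s : ℂ) : ℂ :=
  Pf kp s * (Real.sin ((θ + θx) / 2) : ℂ) + Qf kp s * (Real.cos ((θ + θx) / 2) : ℂ)

def F3f (kp θx θ : ℝ) (s : ℂ) : ℂ := (Real.cos ((θ - θx) / 2) : ℂ) + Pf kp s

def Hth (kp θx θ : ℝ) (s : ℂ) : ℂ :=
  csqrt (F1f kp θx θ s) * csqrt (F2f kp θx θ s) / csqrt (F3f kp θx θ s)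

def sb (kp θc θx : ℝ) : ℂ :=
  (Real.sqrt (2 * kp) : ℂ) * Complex.exp ((Real.pi : ℂ) / 4 * Complex.I) *
    (Real.sin ((θc - θx) / 2) : ℂ)

def sbs (kp θc θx : ℝ) : ℂ :=
  (Real.sqrt (2 * kp) : ℂ) * Complex.exp ((Real.pi : ℂ) / 4 * Complex.I) *
    (Real.sin ((Real.pi - θc - θx) / 2) : ℂ)

/-!
With `P = Pf k₊ s` and `Q = Qf k₊ s` one has `P² + Q² = 1` and `Re P ≥ 0`, while `F⁽¹⁾ - 1` and
`F⁽²⁾` both have the form `L = P a + Q b` with `a² + b² = 1`, `a > 0`. The rotated pair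
`(L, M) = (P a + Q b, Q a - P b)` again satisfies `L² + M² = 1`, so if `L` is real then `M` is real
or purely imaginary, and undoing the rotation gives either `Re P = a L < 0` (impossible) or `P, Q`
both real. The latter happens only on the line `Re s = Im s`, where `Q = Im s / √k₊`, and the strip
condition `|Im s| < √k₊ a` rules it out. So on the strips every square root in `H_θ` is taken off
the branch cut, `F⁽³⁾` has positive real part, and `s - s_b`, `s - s_b*` are not real because
`Im s_b = √k₊ sin((θc - θx)/2)` and `Im s_b* = √k₊ sin((π - θc - θx)/2)`. The bounds on `σ⁽¹⁾` are
`min (sin x) (cos x) ≤ 1/√2` and monotonicity of sine on `[-π/2, π/2]`.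
-/

open scoped Real
open scoped ComplexOrder

lemma csqrt_re_nonneg (z : ℂ) : 0 ≤ (csqrt z).re := by
  rw [csqrt, one_div, cpow_inv_two_re]
  exact Real.sqrt_nonneg _

lemma csqrt_sq (z : ℂ) : csqrt z ^ 2 = z := by
  rw [csqrt, one_div]
  exact cpow_ofNat_inv_pow z 2

lemma csqrt_ne_zero {z : ℂ} (hz : z ≠ 0) : csqrt z ≠ 0 := fun h =>
  hz (by rw [← csqrt_sq z, h, zero_pow two_ne_zero])

lemma DifferentiableAt.csqrt {f : ℂ → ℂ} {x : ℂ} (hf : DifferentiableAt ℂ f x)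
    (h : f x ∈ slitPlane) : DifferentiableAt ℂ (fun z => csqrt (f z)) x :=
  hf.cpow (differentiableAt_const _) h

lemma differentiableAt_csqrt_sub {c s : ℂ} (h : s.im ≠ c.im) :
    DifferentiableAt ℂ (fun z => csqrt (z - c)) s :=
  (differentiableAt_id.sub_const c).csqrt (mem_slitPlane_iff.2 (Or.inr (by simpa [sub_eq_zero])))

lemma exists_ofReal_of_notMem_slitPlane {z : ℂ} (hz : z ∉ slitPlane) :
    ∃ x : ℝ, x ≤ 0 ∧ z = x := by
  rw [mem_slitPlane_iff_not_le_zero, not_not, nonpos_iff] at hz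
  exact ⟨z.re, hz.1, Complex.ext rfl (by simp [hz.2])⟩

section UnitPair

variable {P Q : ℂ} {a b : ℝ}

lemma sq_mul_sub_mul_eq (hPQ : P ^ 2 + Q ^ 2 = 1) (hab : a ^ 2 + b ^ 2 = 1) :
    (Q * a - P * b) ^ 2 = 1 - (P * a + Q * b) ^ 2 := by
  have habC : (a : ℂ) ^ 2 + (b : ℂ) ^ 2 = 1 := by exact_mod_cast hab
  linear_combination ((a : ℂ) ^ 2 + b ^ 2) * hPQ + habC

lemma mul_add_mul_ne_ofReal (hPQ : P ^ 2 + Q ^ 2 = 1) (hP : 0 ≤ P.re) (hab : a ^ 2 + b ^ 2 = 1)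
    (ha : 0 < a) {l : ℝ} (hl : l ≤ -1) : P * a + Q * b ≠ l := by
  intro hL
  have hM := sq_mul_sub_mul_eq hPQ hab
  rw [hL, ← ofReal_pow, ← ofReal_one, ← ofReal_sub] at hM
  have hMre : (Q * a - P * b).re = 0 :=
    Complex.sq_nonpos_iff.1 (by rw [hM]; exact_mod_cast (by nlinarith : 1 - l ^ 2 ≤ 0))
  have hPeq : P = a * l - b * (Q * a - P * b) := by
    linear_combination (-P) * (by exact_mod_cast hab : (a : ℂ) ^ 2 + (b : ℂ) ^ 2 = 1) + a * hL
  have hPre : P.re = a * l := by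
    simpa [hMre] using congrArg Complex.re hPeq
  nlinarith

lemma one_add_mul_add_mul_mem_slitPlane (hPQ : P ^ 2 + Q ^ 2 = 1) (hP : 0 ≤ P.re)
    (hab : a ^ 2 + b ^ 2 = 1) (ha : 0 < a) : 1 + P * a + Q * b ∈ slitPlane := by
  by_contra h
  obtain ⟨x, hx, hxeq⟩ := exists_ofReal_of_notMem_slitPlane h
  exact mul_add_mul_ne_ofReal hPQ hP hab ha (by linarith : x - 1 ≤ -1)
    (by push_cast; linear_combination hxeq)

lemma mul_add_mul_mem_slitPlane (hPQ : P ^ 2 + Q ^ 2 = 1) (hP : 0 ≤ P.re)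
    (hab : a ^ 2 + b ^ 2 = 1) (ha : 0 < a) (hQ : Q.im = 0 → |Q.re| < a) :
    P * a + Q * b ∈ slitPlane := by
  by_contra h
  obtain ⟨x, hx, hL⟩ := exists_ofReal_of_notMem_slitPlane h
  rcases le_or_gt x (-1) with hx1 | hx1
  · exact mul_add_mul_ne_ofReal hPQ hP hab ha hx1 hL
  have habC : (a : ℂ) ^ 2 + (b : ℂ) ^ 2 = 1 := by exact_mod_cast hab
  have hM := sq_mul_sub_mul_eq hPQ hab
  rw [hL, ← ofReal_pow, ← ofReal_one, ← ofReal_sub] at hM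
  have hMim : (Q * a - P * b).im = 0 :=
    Complex.sq_nonneg_iff.1 (by rw [hM]; exact_mod_cast (by nlinarith : 0 ≤ 1 - x ^ 2))
  have hPim : P.im = 0 := by
    have := congrArg Complex.im (show P = a * x - b * (Q * a - P * b) by
      linear_combination (-P) * habC + a * hL)
    simpa [hMim] using this
  have hQim : Q.im = 0 := by
    have := congrArg Complex.im (show Q = b * x + a * (Q * a - P * b) by
      linear_combination (-Q) * habC + b * hL)
    simpa [hMim] using this
  have hpq : P.re ^ 2 + Q.re ^ 2 = 1 := by
    simpa [sq, hPim, hQim] using congrArg Complex.re hPQ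
  have hpa : P.re * a + Q.re * b = x := by
    simpa [hPim, hQim] using congrArg Complex.re hL
  have hq := abs_lt.1 (hQ hQim)
  -- `P = √(1 - Q²) > |b|` because `|Q| < a`, so `P a + Q b > 0`
  nlinarith [mul_nonneg hP ha.le]

end UnitPair

lemma one_sub_sq_mem_slitPlane {Q : ℂ} (hQ : Q.im = 0 → |Q.re| < 1) :
    1 - Q ^ 2 ∈ slitPlane := by
  by_contra h
  obtain ⟨x, hx, hxeq⟩ := exists_ofReal_of_notMem_slitPlane h
  have hQ2 : Q ^ 2 = ((1 - x : ℝ) : ℂ) := by push_cast; linear_combination -hxeq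
  have hQim : Q.im = 0 :=
    Complex.sq_nonneg_iff.1 (by rw [hQ2]; exact_mod_cast (by linarith : 0 ≤ 1 - x))
  have hq : Q.re ^ 2 = 1 - x := by simpa [sq, hQim] using congrArg Complex.re hQ2
  have := abs_lt.1 (hQ hQim)
  nlinarith

lemma im_sqrt_two_mul_exp_mul_ofReal (k r : ℝ) :
    ((√(2 * k) : ℂ) * Complex.exp (π / 4 * I) * r).im = √k * r := by
  have he : (Complex.exp (π / 4 * I)).im = √2 / 2 := by
    rw [show (π : ℂ) / 4 = ((π / 4 : ℝ) : ℂ) by push_cast; ring, exp_ofReal_mul_I_im,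
      Real.sin_pi_div_four]
  simp only [mul_im, ofReal_re, ofReal_im, mul_re, he, zero_mul, mul_zero, add_zero, sub_zero,
    zero_add]
  rw [Real.sqrt_mul (by norm_num)]
  linear_combination (√k * r / 2) * Real.mul_self_sqrt (zero_le_two : (0 : ℝ) ≤ 2)

lemma Qf_sq {k : ℝ} (hk : 0 ≤ k) (s : ℂ) : Qf k s ^ 2 = s ^ 2 / (2 * k * I) := by
  have he : Complex.exp (-(π : ℂ) / 4 * I) ^ 2 = I⁻¹ := by
    rw [← Complex.exp_nat_mul,
      show ((2 : ℕ) : ℂ) * (-(π : ℂ) / 4 * I) = -(π / 2 * I) by push_cast; ring,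
      Complex.exp_neg, exp_pi_div_two_mul_I]
  have hs : ((√(2 * k) : ℝ) : ℂ) ^ 2 = 2 * k := by
    rw [← ofReal_pow, Real.sq_sqrt (by positivity)]
    push_cast
    ring
  rw [Qf, div_pow, mul_pow, he, hs]
  ring

lemma Qf_mul {k : ℝ} (hk : 0 < k) (s : ℂ) :
    Qf k s * ((√(2 * k) : ℂ) * Complex.exp (π / 4 * I)) = s := by
  have hc : ((√(2 * k) : ℝ) : ℂ) ≠ 0 :=
    ofReal_ne_zero.2 (Real.sqrt_ne_zero'.2 (by positivity))
  rw [Qf, div_mul_eq_mul_div, div_eq_iff hc, mul_mul_mul_comm, ← Complex.exp_add, neg_div,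
    neg_mul, neg_add_cancel, Complex.exp_zero, mul_one]

lemma differentiable_Qf (k : ℝ) : Differentiable ℂ (Qf k) := by
  unfold Qf
  fun_prop

lemma abs_re_Qf_lt {k b : ℝ} {s : ℂ} (hk : 0 < k) (hs : |s.im| < √k * b)
    (hQ : (Qf k s).im = 0) : |(Qf k s).re| < b := by
  have hs_eq : s.im = √k * (Qf k s).re := by
    have hQre : Qf k s = (Qf k s).re := Complex.ext rfl (by simp [hQ])
    conv_lhs => rw [← Qf_mul hk s, hQre, mul_comm]
    exact im_sqrt_two_mul_exp_mul_ofReal k _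
  rw [hs_eq, abs_mul, abs_of_pos (Real.sqrt_pos.2 hk)] at hs
  exact lt_of_mul_lt_mul_left hs (Real.sqrt_nonneg k)

lemma differentiableAt_Pf {k : ℝ} {s : ℂ} (hk : 0 < k) (hs : |s.im| < √k) :
    DifferentiableAt ℂ (Pf k) s := by
  have hslit : 1 - s ^ 2 / (2 * k * I) ∈ slitPlane := by
    rw [← Qf_sq hk.le]
    exact one_sub_sq_mem_slitPlane (abs_re_Qf_lt hk (by rwa [mul_one]))
  exact (by fun_prop : DifferentiableAt ℂ (fun s : ℂ => 1 - s ^ 2 / (2 * k * I)) s).csqrt hslit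

lemma pos_of_abs_lt_mul {y r x : ℝ} (hr : 0 ≤ r) (h : |y| < r * x) : 0 < x :=
  pos_of_mul_pos_right ((abs_nonneg y).trans_lt h) hr

lemma differentiableAt_Hth {k θx θ : ℝ} {s : ℂ} (hk : 0 < k)
    (hcos : 0 < Real.cos ((θ - θx) / 2)) (hs : |s.im| < √k * Real.sin ((θ + θx) / 2)) :
    DifferentiableAt ℂ (Hth k θx θ) s := by
  have hsin : 0 < Real.sin ((θ + θx) / 2) := pos_of_abs_lt_mul (Real.sqrt_nonneg k) hs
  have hP : DifferentiableAt ℂ (Pf k) s :=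
    differentiableAt_Pf hk <|
      hs.trans_le (mul_le_of_le_one_right (Real.sqrt_nonneg k) (Real.sin_le_one _))
  have hQ : DifferentiableAt ℂ (Qf k) s := differentiable_Qf k s
  have hPQ : Pf k s ^ 2 + Qf k s ^ 2 = 1 := by rw [Pf, csqrt_sq, Qf_sq hk.le]; ring
  have hPre : 0 ≤ (Pf k s).re := csqrt_re_nonneg _
  have h1 : F1f k θx θ s ∈ slitPlane :=
    one_add_mul_add_mul_mem_slitPlane hPQ hPre (Real.cos_sq_add_sin_sq _) hcos
  have h2 : F2f k θx θ s ∈ slitPlane :=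
    mul_add_mul_mem_slitPlane hPQ hPre (Real.sin_sq_add_cos_sq _) hsin (abs_re_Qf_lt hk hs)
  have h3 : F3f k θx θ s ∈ slitPlane :=
    mem_slitPlane_iff.2 (Or.inl (by simp only [F3f, add_re, ofReal_re]; linarith))
  have hd1 : DifferentiableAt ℂ (F1f k θx θ) s := by unfold F1f; fun_prop
  have hd2 : DifferentiableAt ℂ (F2f k θx θ) s := by unfold F2f; fun_prop
  have hd3 : DifferentiableAt ℂ (F3f k θx θ) s := by unfold F3f; fun_prop
  exact ((hd1.csqrt h1).mul (hd2.csqrt h2)).div (hd3.csqrt h3)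
    (csqrt_ne_zero (slitPlane_ne_zero h3))

lemma Real.abs_sin_le_sin_of_abs_le {d x : ℝ} (h : |d| ≤ x) (hx : x ≤ π / 2) :
    |Real.sin d| ≤ Real.sin x := by
  obtain ⟨h₁, h₂⟩ := abs_le.1 h
  refine abs_le.2 ⟨?_, Real.sin_le_sin_of_le_of_le_pi_div_two (by linarith) hx h₂⟩
  rw [← Real.sin_neg]
  exact Real.sin_le_sin_of_le_of_le_pi_div_two (by linarith) (by linarith) h₁

lemma Real.abs_sin_le_cos_of_abs_add_abs_le {x y : ℝ} (h : |x| + |y| ≤ π / 2) :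
    |Real.sin x| ≤ Real.cos y := by
  rw [← Real.cos_abs, ← Real.sin_pi_div_two_sub]
  exact Real.abs_sin_le_sin_of_abs_le (by linarith) (by linarith [abs_nonneg y])

lemma Real.min_sin_cos_le (x : ℝ) : min (Real.sin x) (Real.cos x) ≤ (√2)⁻¹ := by
  have hsum : Real.sin x + Real.cos x ≤ √2 :=
    Real.le_sqrt_of_sq_le <| by
      nlinarith [Real.sin_sq_add_cos_sq x, sq_nonneg (Real.sin x - Real.cos x)]
  have h2 : (√2)⁻¹ = √2 / 2 := by
    field_simp
    rw [Real.sq_sqrt zero_le_two]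
  rw [h2]
  linarith [min_le_left (Real.sin x) (Real.cos x), min_le_right (Real.sin x) (Real.cos x)]

/-- `stripWidth (√k₊) θc θx` is `σ⁽¹⁾`. -/
def stripWidth (r u v : ℝ) : ℝ :=
  min (r * min (Real.sin ((u + v) / 2)) (Real.cos ((u - v) / 2))) (r * Real.sin ((π - u - v) / 2))

section StripWidth

variable {r u v : ℝ}

lemma stripWidth_le_div_sqrt_two (hr : 0 ≤ r) : stripWidth r u v ≤ r / √2 := by
  have hcos : Real.sin ((π - u - v) / 2) = Real.cos ((u + v) / 2) := by
    rw [← Real.sin_pi_div_two_sub]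
    congr 1
    ring
  calc stripWidth r u v ≤ r * min (Real.sin ((u + v) / 2)) (Real.cos ((u + v) / 2)) := by
        rw [stripWidth, hcos]
        exact (min_le_min_right _ (mul_le_mul_of_nonneg_left (min_le_left _ _) hr)).trans
          (mul_min_of_nonneg _ _ hr).ge
    _ ≤ r / √2 := by
        rw [div_eq_mul_inv]
        exact mul_le_mul_of_nonneg_left (Real.min_sin_cos_le _) hr

lemma stripWidth_pos (hu : u ∈ Ioo 0 (π / 2)) (hv : v ∈ Ioo 0 (π / 2)) (hr : 0 < r) :
    0 < stripWidth r u v := by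
  obtain ⟨hu₀, hu₁⟩ := hu
  obtain ⟨hv₀, hv₁⟩ := hv
  refine lt_min (mul_pos hr (lt_min ?_ ?_)) (mul_pos hr ?_)
  · exact Real.sin_pos_of_pos_of_lt_pi (by linarith) (by linarith)
  · exact Real.cos_pos_of_mem_Ioo ⟨by linarith, by linarith⟩
  · exact Real.sin_pos_of_pos_of_lt_pi (by linarith) (by linarith)

lemma min_le_stripWidth (hu : u ∈ Ioo 0 (π / 2)) (hv : v ∈ Ioo 0 (π / 2))
    (hr : 0 ≤ r) :
    min (r * Real.sin (u / 2)) (r * Real.sin (π / 4 - u / 2)) ≤ stripWidth r u v := by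
  obtain ⟨hu₀, hu₁⟩ := hu
  obtain ⟨hv₀, hv₁⟩ := hv
  have h₁ : Real.sin (u / 2) ≤ Real.sin ((u + v) / 2) :=
    Real.sin_le_sin_of_le_of_le_pi_div_two (by linarith) (by linarith) (by linarith)
  have h₂ : Real.sin (u / 2) ≤ Real.cos ((u - v) / 2) := by
    refine (le_abs_self _).trans (Real.abs_sin_le_cos_of_abs_add_abs_le ?_)
    have : |(u - v) / 2| ≤ π / 2 - u / 2 := abs_le.2 ⟨by linarith, by linarith⟩
    rw [abs_of_pos (by linarith : 0 < u / 2)]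
    linarith
  have h₃ : Real.sin (π / 4 - u / 2) ≤ Real.sin ((π - u - v) / 2) :=
    Real.sin_le_sin_of_le_of_le_pi_div_two (by linarith) (by linarith) (by linarith)
  exact le_min ((min_le_left _ _).trans (mul_le_mul_of_nonneg_left (le_min h₁ h₂) hr))
    ((min_le_right _ _).trans (mul_le_mul_of_nonneg_left h₃ hr))

lemma mul_abs_sin_le_stripWidth (hu : u ∈ Ioo 0 (π / 2)) (hv : v ∈ Ioo 0 (π / 2))
    (hr : 0 ≤ r) : r * |Real.sin ((u - v) / 2)| ≤ stripWidth r u v := by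
  obtain ⟨hu₀, hu₁⟩ := hu
  obtain ⟨hv₀, hv₁⟩ := hv
  have h₁ : |Real.sin ((u - v) / 2)| ≤ Real.sin ((u + v) / 2) :=
    Real.abs_sin_le_sin_of_abs_le (abs_le.2 ⟨by linarith, by linarith⟩) (by linarith)
  have hd : |(u - v) / 2| ≤ π / 4 := abs_le.2 ⟨by linarith, by linarith⟩
  have h₂ : |Real.sin ((u - v) / 2)| ≤ Real.cos ((u - v) / 2) :=
    Real.abs_sin_le_cos_of_abs_add_abs_le (by linarith)
  have h₃ : |Real.sin ((u - v) / 2)| ≤ Real.sin ((π - u - v) / 2) :=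
    Real.abs_sin_le_sin_of_abs_le (abs_le.2 ⟨by linarith, by linarith⟩) (by linarith)
  exact le_min (mul_le_mul_of_nonneg_left (le_min h₁ h₂) hr) (mul_le_mul_of_nonneg_left h₃ hr)

end StripWidth

lemma differentiableOn_Hth_mul_Hth_mul_csqrt {k : ℝ} (hk : 0 < k) (θc θx : ℝ) :
    DifferentiableOn ℂ
      (fun s => Hth k θx θc s * Hth k θx (π - θc) s * csqrt (s - sbs k θc θx))
      {s : ℂ | |s.im| < stripWidth (√k) θc θx} := by
  intro s hs
  have h₁ : |s.im| < √k * Real.sin ((θc + θx) / 2) := hs.trans_le <|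
    (min_le_left _ _).trans (mul_le_mul_of_nonneg_left (min_le_left _ _) (Real.sqrt_nonneg k))
  have h₂ : |s.im| < √k * Real.cos ((θc - θx) / 2) := hs.trans_le <|
    (min_le_left _ _).trans (mul_le_mul_of_nonneg_left (min_le_right _ _) (Real.sqrt_nonneg k))
  have h₃ : |s.im| < √k * Real.sin ((π - θc - θx) / 2) := hs.trans_le (min_le_right _ _)
  have hH : DifferentiableAt ℂ (Hth k θx θc) s :=
    differentiableAt_Hth hk (pos_of_abs_lt_mul (Real.sqrt_nonneg k) h₂) h₁
  have hH' : DifferentiableAt ℂ (Hth k θx (π - θc)) s := by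
    refine differentiableAt_Hth hk ?_ ?_
    · rw [show (π - θc - θx) / 2 = π / 2 - (θc + θx) / 2 by ring, Real.cos_pi_div_two_sub]
      exact pos_of_abs_lt_mul (Real.sqrt_nonneg k) h₁
    · rwa [show (π - θc + θx) / 2 = π / 2 - (θc - θx) / 2 by ring, Real.sin_pi_div_two_sub]
  have hsqrt : DifferentiableAt ℂ (fun z => csqrt (z - sbs k θc θx)) s := by
    refine differentiableAt_csqrt_sub ?_
    rw [sbs, im_sqrt_two_mul_exp_mul_ofReal]
    exact ((le_abs_self _).trans_lt h₃).ne
  exact ((hH.mul hH').mul hsqrt).differentiableWithinAt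

lemma differentiableOn_csqrt_sub_sb (k θc θx : ℝ) :
    DifferentiableOn ℂ (fun s => csqrt (s - sb k θc θx))
      {s : ℂ | |s.im| < √k * |Real.sin ((θc - θx) / 2)|} := by
  intro s (hs : |s.im| < _)
  refine (differentiableAt_csqrt_sub ?_).differentiableWithinAt
  rw [sb, im_sqrt_two_mul_exp_mul_ofReal]
  intro h
  rw [h, abs_mul, abs_of_nonneg (Real.sqrt_nonneg k)] at hs
  exact lt_irrefl _ hs

theorem statement19 (kp km : ℝ) (hkm : 0 < km) (hk : km < kp) (θx : ℝ)
    (hθ : θx ∈ Set.Ioo 0 (Real.pi / 2)) :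
    let θc := Real.arccos (km / kp)
    let σθx := Real.sqrt kp * min (Real.sin ((θc + θx) / 2)) (Real.cos ((θc - θx) / 2))
    let σ1 := min σθx (Real.sqrt kp * Real.sin ((Real.pi - θc - θx) / 2))
    let σ2 := Real.sqrt kp * |Real.sin ((θc - θx) / 2)|
    DifferentiableOn ℂ
        (fun s => Hth kp θx θc s * Hth kp θx (Real.pi - θc) s * csqrt (s - sbs kp θc θx))
        {s : ℂ | |s.im| < σ1} ∧
    DifferentiableOn ℂ
        (fun s => Hth kp θx θc s * Hth kp θx (Real.pi - θc) s * csqrt (s - sbs kp θc θx) *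
          csqrt (s - sb kp θc θx))
        {s : ℂ | |s.im| < σ2} ∧
    min (Real.sqrt kp * Real.sin (θc / 2)) (Real.sqrt kp * Real.sin (Real.pi / 4 - θc / 2)) ≤ σ1 ∧
    σ1 ≤ Real.sqrt kp / Real.sqrt 2 ∧
    Real.sqrt kp / Real.sqrt 2 < Real.sqrt kp ∧
    0 < σ1 := by
  intro θc σθx σ1 σ2
  have hkp : 0 < kp := hkm.trans hk
  have hsk : 0 < √kp := Real.sqrt_pos.2 hkp
  have hθc : θc ∈ Ioo 0 (π / 2) :=
    ⟨Real.arccos_pos.2 ((div_lt_one hkp).2 hk), Real.arccos_lt_pi_div_two.2 (div_pos hkm hkp)⟩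
  have hσ₁ := differentiableOn_Hth_mul_Hth_mul_csqrt hkp θc θx
  refine ⟨hσ₁, ?_, min_le_stripWidth hθc hθ hsk.le, stripWidth_le_div_sqrt_two hsk.le,
    div_lt_self hsk Real.one_lt_sqrt_two, stripWidth_pos hθc hθ hsk⟩
  exact (hσ₁.mono fun s hs => lt_of_lt_of_le hs (mul_abs_sin_le_stripWidth hθc hθ hsk.le)).mul
    (differentiableOn_csqrt_sub_sb kp θc θx)
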